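/- arXiv:1808.03541 — 2 statements merged into one kernel-verified Lean document; each statement's English description precedes it below -/
import Mathlib

section
/- Let (C, F) be a Galois category and let X be a Galois object of C, i.e., a connected object with |Aut(X)| = |F(X)|. Then the quotient X/Aut(X), defined as the colimit (coequalizer) of the family of arrows σ : X → X for σ ∈ Aut(X), is a terminal object of C. -/
/-!
For connected `X` and a point `a` of the fiber, `σ ↦ F(σ) a` is injective on `Aut X`, so the
cardinality assumption makes it bijective. Hence `Aut X` acts transitively on `F X`, which is
equivalent to the quotient `X / Aut X` being terminal.
-/

open CategoryTheory PreGaloisCategory Limits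

universe u₁ u₂ w

namespace CategoryTheory.PreGaloisCategory

lemma isGalois_of_card_aut_eq_card_fiber {C : Type u₁} [Category.{u₂} C] [GaloisCategory C]
    (F : C ⥤ FintypeCat.{w}) [FiberFunctor F] (X : C) [IsConnected X]
    (hcard : Nat.card (Aut X) = Nat.card (F.obj X)) : IsGalois X := by
  rw [isGalois_iff_pretransitive F]
  obtain ⟨a⟩ := nonempty_fiber_of_isConnected F X
  have hbij : Function.Bijective (fun σ : Aut X ↦ σ • a) :=
    (Nat.bijective_iff_injective_and_card _).mpr
      ⟨evaluation_aut_injective_of_isConnected F X a, hcard⟩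
  exact (MulAction.isPretransitive_iff_base a).mpr hbij.surjective

end CategoryTheory.PreGaloisCategory

theorem quotient_of_galois_object_is_terminal
    {C : Type u₁} [Category.{u₂} C] [GaloisCategory C]
    (F : C ⥤ FintypeCat.{w}) [FiberFunctor F]
    (X : C) [IsConnected X] (hcard : Nat.card (Aut X) = Nat.card (F.obj X)) :
    Nonempty (IsTerminal (colimit (SingleObj.functor (Aut.toEnd X)))) := by
  have : IsGalois X := isGalois_of_card_aut_eq_card_fiber F X hcard
  exact ⟨isTerminalQuotientOfIsGalois X⟩
end

section
/- Let G be a (discrete) group. The category of finite G-sets (finite sets with a G-action, with G-equivariant maps), equipped with the forgetful functor F to finite sets, is a Galois category, and its fundamental group Aut(F) is isomorphic, as a profinite group, to the profinite completion of G, i.e., to the inverse limit of the finite quotients G/N taken over all normal subgroups N of G of finite index. -/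
/-!
A compatible family `f = (f_N)` acts on a finite `G`-set `X` through its component at the
kernel `K_X` of the permutation representation, on which `G ⧸ K_X` acts faithfully. This action
commutes with equivariant maps `X → Y` (compare both sides on `G ⧸ (K_X ⊓ K_Y)`, where `f` is
represented by some `g ∈ G`), is transitive on connected `X` because the image of `G` already is,
is continuous because it factors through a discrete quotient, and is faithful: if `f` fixes the
trivial coset of `G ⧸ N`, then `f_N = 1`. The completion is compact, so by the characterisation
of fundamental groups of Galois categories (`IsFundamentalGroup`) it is isomorphic to `Aut F`
as a topological group.
-/

open CategoryTheory PreGaloisCategory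

universe u

/-- The index type of normal subgroups of finite index of a group `G`. -/
structure NormalFiniteIndexSubgroup (G : Type*) [Group G] where
  /-- the underlying subgroup -/
  N : Subgroup G
  [normal : N.Normal]
  [finiteIndex : N.FiniteIndex]

attribute [instance] NormalFiniteIndexSubgroup.normal NormalFiniteIndexSubgroup.finiteIndex

/-- The profinite completion of a group `G`: the inverse limit of the finite quotients
`G/N` over all normal subgroups `N` of finite index in `G`, realized as the subgroup of
compatible families in the product of all these quotients. -/
def ProfiniteCompletion (G : Type*) [Group G] :
    Subgroup (∀ i : NormalFiniteIndexSubgroup G, G ⧸ i.N) where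
  carrier := {f | ∀ (i j : NormalFiniteIndexSubgroup G) (h : i.N ≤ j.N),
    QuotientGroup.map i.N j.N (MonoidHom.id G)
      (h.trans (le_of_eq (Subgroup.comap_id j.N).symm)) (f i) = f j}
  one_mem' := by
    intro i j h
    simp
  mul_mem' := by
    intro f g hf hg i j h
    simp only [Pi.mul_apply, map_mul, hf i j h, hg i j h]
  inv_mem' := by
    intro f hf i j h
    simp only [Pi.inv_apply, map_inv, hf i j h]

/-- Each quotient `G/N` carries the discrete topology (the quotient of a discrete group
is discrete). -/
instance (priority := 900) instTopQuotientDiscrete {G : Type*} [Group G] (N : Subgroup G) :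
    TopologicalSpace (G ⧸ N) := ⊥

instance {G : Type*} [Group G] (N : Subgroup G) : DiscreteTopology (G ⧸ N) := ⟨rfl⟩

namespace ProfiniteCompletion

variable {G : Type*} [Group G]

theorem eval_eq_of_le (f : ProfiniteCompletion G) {i j : NormalFiniteIndexSubgroup G}
    (hij : i.N ≤ j.N) {g : G} (hg : f.1 i = g) : f.1 j = g := by
  rw [← f.2 i j hij, hg]
  rfl

theorem isClosed_coe :
    IsClosed (ProfiniteCompletion G : Set (∀ i : NormalFiniteIndexSubgroup G, G ⧸ i.N)) := by
  simp only [ProfiniteCompletion, Subgroup.coe_set_mk, Submonoid.coe_set_mk,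
    Subsemigroup.coe_set_mk, Set.ofPred_forall]
  exact isClosed_iInter fun i => isClosed_iInter fun j => isClosed_iInter fun _ =>
    isClosed_eq (continuous_of_discreteTopology.comp (continuous_apply i)) (continuous_apply j)

instance : CompactSpace (ProfiniteCompletion G) :=
  isCompact_iff_compactSpace.mp isClosed_coe.isCompact

def ofGroup : G →* ProfiniteCompletion G where
  toFun g := ⟨fun _ => g, fun _ _ _ => rfl⟩
  map_one' := rfl
  map_mul' _ _ := rfl

section FiniteGSet

variable (α : Type*) [MulAction G α] [Finite α]

def permKernel : NormalFiniteIndexSubgroup G := ⟨(MulAction.toPermHom G α).ker⟩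

def permHom : ProfiniteCompletion G →* Equiv.Perm α :=
  (QuotientGroup.kerLift (MulAction.toPermHom G α)).comp
    ((Pi.evalMonoidHom (fun i : NormalFiniteIndexSubgroup G => G ⧸ i.N) (permKernel α)).comp
      (ProfiniteCompletion G).subtype)

instance : MulAction (ProfiniteCompletion G) α := MulAction.compHom α (permHom α)

variable {α}

theorem smul_eq_smul_of_eval_eq (f : ProfiniteCompletion G) {i : NormalFiniteIndexSubgroup G}
    (hi : i.N ≤ (permKernel α).N) {g : G} (hg : f.1 i = g) (x : α) : f • x = g • x := by
  change QuotientGroup.kerLift (MulAction.toPermHom G α) (f.1 (permKernel α)) x = g • x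
  rw [eval_eq_of_le f hi hg]
  rfl

theorem ofGroup_smul (g : G) (x : α) : ofGroup g • x = g • x :=
  smul_eq_smul_of_eval_eq _ le_rfl rfl x

theorem mulActionHom_map_smul {β : Type*} [MulAction G β] [Finite β] (φ : α →[G] β)
    (f : ProfiniteCompletion G) (x : α) : φ (f • x) = f • φ x := by
  obtain ⟨g, hg⟩ := QuotientGroup.mk_surjective (f.1 ⟨(permKernel α).N ⊓ (permKernel β).N⟩)
  rw [smul_eq_smul_of_eval_eq f inf_le_left hg.symm,
    smul_eq_smul_of_eval_eq f inf_le_right hg.symm, _root_.map_smul]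

instance [MulAction.IsPretransitive G α] : MulAction.IsPretransitive (ProfiniteCompletion G) α :=
  MulAction.IsPretransitive.of_smul_eq ofGroup (ofGroup_smul _ _)

instance [TopologicalSpace α] [DiscreteTopology α] : ContinuousSMul (ProfiniteCompletion G) α where
  continuous_smul := by
    have : Continuous fun p : ProfiniteCompletion G × α => (p.1.1 (permKernel α), p.2) :=
      ((continuous_apply _).comp (continuous_subtype_val.comp continuous_fst)).prodMk continuous_snd
    exact (continuous_of_discreteTopology (f := fun q : (G ⧸ (permKernel α).N) × α =>
      QuotientGroup.kerLift (MulAction.toPermHom G α) q.1 q.2)).comp this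

theorem eq_one_of_forall_smul_eq (f : ProfiniteCompletion G)
    (h : ∀ (i : NormalFiniteIndexSubgroup G) (x : G ⧸ i.N), f • x = x) : f = 1 := by
  ext i : 2
  obtain ⟨g, hg⟩ := QuotientGroup.mk_surjective (f.1 i)
  have hle : i.N ≤ (permKernel (G ⧸ i.N)).N :=
    (Subgroup.normalCore_eq_self i.N).symm.trans_le (Subgroup.normalCore_eq_ker i.N).le
  have hfix := smul_eq_smul_of_eval_eq f hle hg.symm (1 : G ⧸ i.N)
  rw [h, ← QuotientGroup.mk_one, MulAction.Quotient.smul_mk, smul_eq_mul, mul_one] at hfix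
  exact hg.symm.trans hfix.symm

end FiniteGSet

end ProfiniteCompletion

namespace Action.FintypeCat

variable {G : Type u} [Group G]

def toMulActionHom {X Y : Action FintypeCat.{u} (MonCat.of G)} (φ : X ⟶ Y) : X.V →[G] Y.V :=
  ⟨φ.hom, fun g x => congrArg (fun h : X.V ⟶ Y.V => h x) (φ.comm g)⟩

instance (X : Action FintypeCat.{u} (MonCat.of G)) :
    MulAction G ((Action.forget FintypeCat (MonCat.of G)).obj X) :=
  inferInstanceAs (MulAction G X.V)

end Action.FintypeCat

open ProfiniteCompletion in
instance (G : Type u) [Group G] :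
    IsFundamentalGroup (Action.forget FintypeCat.{u} (MonCat.of G)) (ProfiniteCompletion G) where
  naturality f _ _ φ x := mulActionHom_map_smul (Action.FintypeCat.toMulActionHom φ) f x
  transitive_of_isGalois X _ :=
    have : MulAction.IsPretransitive G ((Action.forget FintypeCat (MonCat.of G)).obj X) :=
      FintypeCat.Action.pretransitive_of_isConnected G X
    inferInstance
  continuous_smul X :=
    have : DiscreteTopology ((Action.forget FintypeCat.{u} (MonCat.of G)).obj X) := ⟨rfl⟩
    inferInstance
  non_trivial' f h := eq_one_of_forall_smul_eq f fun i =>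
    letI : Fintype (G ⧸ i.N) := Fintype.ofFinite _
    h (Action.FintypeCat.ofMulAction G (FintypeCat.of (G ⧸ i.N)))

/-- The category of finite `G`-sets, together with the forgetful functor to finite sets,
is a Galois category whose fundamental group is the profinite completion of `G`. -/
theorem finite_G_sets_galois_category_with_fundamental_group_profinite_completion
    (G : Type u) [Group G] :
    PreGaloisCategory (Action FintypeCat.{u} (MonCat.of G)) ∧
    Nonempty (FiberFunctor (Action.forget FintypeCat.{u} (MonCat.of G))) ∧
    ∃ e : Aut (Action.forget FintypeCat.{u} (MonCat.of G)) ≃* ProfiniteCompletion G,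
      Continuous e ∧ Continuous e.symm := by
  let F := Action.forget FintypeCat.{u} (MonCat.of G)
  have hμ := (toAutMulEquiv F (ProfiniteCompletion G)).toEquiv.isHomeomorph_iff.mp
    (toAutMulEquiv_isHomeomorph F (ProfiniteCompletion G))
  exact ⟨inferInstance, ⟨inferInstance⟩, (toAutMulEquiv F _).symm, hμ.2, hμ.1⟩
end
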